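/- arXiv:2209.12363 — 7 statements merged into one kernel-verified Lean document; each statement's English description precedes it below -/
import Mathlib

section
/- Let c ≥ 2 and let ν₁,…,ν_c be nonzero real numbers with 1 + ν₁ + ⋯ + ν_c ≠ 0. Let n₀ : [0,1] → ℝ be a constant function with value d₀ > 0 (the solvent), and let n₁,…,n_c : [0,1] → ℝ be differentiable with n_i(t) > 0 and ν_j·n_i′(t) = ν_i·n_j′(t) for all 1 ≤ i,j ≤ c and all t. Put n(t) = n₀(t)+n₁(t)+⋯+n_c(t), x_i(t) = n_i(t)/n(t) for 0 ≤ i ≤ c, and Q(t) = x₀(t)·∏_{i=1}^c x_i(t)^{ν_i}. Then Q is constant on [0,1] if and only if every n_i (1 ≤ i ≤ c) is constant on [0,1]. -/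
/-!
Along a feasible path all solute amounts are affine in a single extent of reaction `ξ`,
`nⱼ = aⱼ + νⱼ ξ`, so `log Q` is a function `F ξ` with
`F' ξ = ∑ νⱼ² / nⱼ - (1 + ∑ ν) (∑ ν) / n`. If `Q` is constant while the amounts are not, the
extent sweeps a nondegenerate interval on which `F' = 0`. For `∑ ν = 0` this is impossible since
then `F' > 0`. Otherwise `F'` is a sum of fractions `w / (c + b ξ)` with `b ≠ 0`; clearing
denominators gives a polynomial, so `F'` vanishes for all large `ξ`, contradicting
`ξ F' ξ → ∑ ν - (1 + ∑ ν) = -1` as `ξ → ∞`.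
-/

open Filter Polynomial Set Topology

theorem tendsto_mul_div_affine_atTop {b : ℝ} (hb : b ≠ 0) (w c : ℝ) :
    Tendsto (fun x => x * (w / (c + b * x))) atTop (𝓝 (w / b)) := by
  have hden : Tendsto (fun x : ℝ => b + c / x) atTop (𝓝 b) := by
    simpa using (tendsto_const_nhds (x := b)).add
      ((tendsto_const_nhds (x := c)).div_atTop tendsto_id)
  refine (Tendsto.div (f := fun _ => w) tendsto_const_nhds hden hb).congr' ?_
  filter_upwards [eventually_ne_atTop 0] with x hx
  simp only [Pi.div_apply]
  field_simp
  ring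

theorem sum_div_eq_zero_of_sum_div_affine_eq_zero {κ : Type*} [Fintype κ] {w b c : κ → ℝ}
    (hb : ∀ k, b k ≠ 0) {s : Set ℝ} (hs : s.Infinite) (hne : ∀ x ∈ s, ∀ k, c k + b k * x ≠ 0)
    (h : ∀ x ∈ s, ∑ k, w k / (c k + b k * x) = 0) :
    ∑ k, w k / b k = 0 := by
  classical
  set P : ℝ[X] := ∑ k, C (w k) * ∏ l ∈ Finset.univ.erase k, (C (c l) + C (b l) * X)
  have hP_eval : ∀ x, (∀ k, c k + b k * x ≠ 0) →
      P.eval x = (∑ k, w k / (c k + b k * x)) * ∏ l, (c l + b l * x) := by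
    intro x hx
    simp only [P, eval_finsetSum, eval_mul, eval_prod, eval_add, eval_C, eval_X, Finset.sum_mul]
    refine Finset.sum_congr rfl fun k _ => ?_
    rw [← Finset.mul_prod_erase _ _ (Finset.mem_univ k), ← mul_assoc, div_mul_cancel₀ _ (hx k)]
  have hP : P = 0 := P.eq_zero_of_infinite_isRoot <| hs.mono fun x hx => by
    simp [IsRoot, hP_eval x (hne x hx), h x hx]
  have hzero : ∀ᶠ x in atTop, ∑ k, w k / (c k + b k * x) = 0 := by
    have hden : ∀ᶠ x in atTop, ∀ k, c k + b k * x ≠ 0 := by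
      refine eventually_all.2 fun k => ?_
      filter_upwards [eventually_ne_atTop (-c k / b k)] with x hx
      contrapose! hx
      rw [eq_div_iff (hb k)]
      linarith
    filter_upwards [hden] with x hx
    have := hP_eval x hx
    rw [hP, eval_zero, eq_comm, mul_eq_zero] at this
    exact this.resolve_right (Finset.prod_ne_zero_iff.2 fun l _ => hx l)
  have hlim : Tendsto (fun x => x * ∑ k, w k / (c k + b k * x)) atTop (𝓝 (∑ k, w k / b k)) := by
    simp only [Finset.mul_sum]
    exact tendsto_finsetSum _ fun k _ => tendsto_mul_div_affine_atTop (hb k) (w k) (c k)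
  refine tendsto_nhds_unique hlim (tendsto_const_nhds.congr' ?_)
  filter_upwards [hzero] with x hx
  rw [hx, mul_zero]

theorem exists_Ioo_subset_image_of_ne {X : Type*} [TopologicalSpace X] {s : Set X} {f : X → ℝ}
    (hs : IsPreconnected s) (hf : ContinuousOn f s) {a b : X} (ha : a ∈ s) (hb : b ∈ s)
    (hab : f a ≠ f b) :
    ∃ u v, u < v ∧ Ioo u v ⊆ f '' s := by
  rcases hab.lt_or_gt with hlt | hlt
  · exact ⟨_, _, hlt, Ioo_subset_Icc_self.trans (hs.intermediate_value ha hb hf)⟩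
  · exact ⟨_, _, hlt, Ioo_subset_Icc_self.trans (hs.intermediate_value hb ha hf)⟩

theorem exists_extent_of_linkage {ι : Type*} {ν : ι → ℝ} {n n' : ι → ℝ → ℝ} {a b : ℝ}
    (i₀ : ι) (hν₀ : ν i₀ ≠ 0)
    (hderiv : ∀ i, ∀ t ∈ Icc a b, HasDerivAt (n i) (n' i t) t)
    (hlink : ∀ i j, ∀ t ∈ Icc a b, ν j * n' i t = ν i * n' j t) :
    ∃ ξ : ℝ → ℝ, ContinuousOn ξ (Icc a b) ∧ ∀ j, ∀ t ∈ Icc a b, n j t = n j a + ν j * ξ t := by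
  refine ⟨fun t => (n i₀ t - n i₀ a) / ν i₀,
    fun t ht => ((hderiv i₀ t ht).continuousAt.sub continuousAt_const).div_const _
      |>.continuousWithinAt, fun j t ht => ?_⟩
  have hconst := constant_of_has_deriv_right_zero (f := fun t => ν i₀ * n j t - ν j * n i₀ t)
    (fun t ht => (((hderiv j t ht).const_mul _).sub ((hderiv i₀ t ht).const_mul _))
      |>.continuousAt.continuousWithinAt)
    (fun t ht => by
      have h := ((hderiv j t (Ico_subset_Icc_self ht)).const_mul (ν i₀)).sub
        ((hderiv i₀ t (Ico_subset_Icc_self ht)).const_mul (ν j))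
      rw [hlink j i₀ t (Ico_subset_Icc_self ht), sub_self] at h
      exact h.hasDerivWithinAt) t ht
  field_simp
  linarith

section
variable {ι : Type*} [Fintype ι]

noncomputable def logActivityQuotient (d₀ : ℝ) (ν m : ι → ℝ) : ℝ :=
  Real.log d₀ + ∑ j, ν j * Real.log (m j) - (1 + ∑ j, ν j) * Real.log (d₀ + ∑ j, m j)

theorem log_activityQuotient {d₀ : ℝ} (hd₀ : 0 < d₀) (ν : ι → ℝ) {m : ι → ℝ}
    (hm : ∀ j, 0 < m j) :
    Real.log (d₀ / (d₀ + ∑ j, m j) * ∏ j, (m j / (d₀ + ∑ j, m j)) ^ ν j) =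
      logActivityQuotient d₀ ν m := by
  have hN : 0 < d₀ + ∑ j, m j :=
    add_pos_of_pos_of_nonneg hd₀ (Finset.sum_nonneg fun j _ => (hm j).le)
  have hx : ∀ j, 0 < m j / (d₀ + ∑ j, m j) := fun j => div_pos (hm j) hN
  have hpow : ∀ j, 0 < (m j / (d₀ + ∑ j, m j)) ^ ν j := fun j => Real.rpow_pos_of_pos (hx j) _
  rw [Real.log_mul (div_pos hd₀ hN).ne' (Finset.prod_pos fun j _ => hpow j).ne',
    Real.log_prod fun j _ => (hpow j).ne',
    Real.log_div hd₀.ne' hN.ne', logActivityQuotient]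
  simp only [Real.log_rpow (hx _), Real.log_div (hm _).ne' hN.ne', mul_sub,
    Finset.sum_sub_distrib, ← Finset.sum_mul]
  ring

theorem hasDerivAt_logActivityQuotient_affine {d₀ : ℝ} {a ν : ι → ℝ} {ξ : ℝ}
    (hm : ∀ j, a j + ν j * ξ ≠ 0) (hN : d₀ + ∑ j, (a j + ν j * ξ) ≠ 0) :
    HasDerivAt (fun ξ => logActivityQuotient d₀ ν fun j => a j + ν j * ξ)
      (∑ j, ν j ^ 2 / (a j + ν j * ξ) -
        (1 + ∑ j, ν j) * (∑ j, ν j) / (d₀ + ∑ j, (a j + ν j * ξ))) ξ := by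
  have hm' : ∀ j, HasDerivAt (fun ξ => a j + ν j * ξ) (ν j) ξ := fun j => by
    simpa using ((hasDerivAt_id ξ).const_mul (ν j)).const_add (a j)
  have hN' := (HasDerivAt.fun_sum fun j (_ : j ∈ Finset.univ) => hm' j).const_add d₀
  refine (((HasDerivAt.fun_sum fun j (_ : j ∈ Finset.univ) =>
    ((hm' j).log (hm j)).const_mul (ν j)).const_add (Real.log d₀)).fun_sub
      ((hN'.log hN).const_mul (1 + ∑ j, ν j))).congr_deriv ?_
  simp only [sq, mul_div_assoc]

theorem logActivityQuotient_affine_not_constOn [Nonempty ι] {d₀ : ℝ} (hd₀ : 0 ≤ d₀)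
    {a ν : ι → ℝ} (hν : ∀ j, ν j ≠ 0) {u v : ℝ} (huv : u < v)
    (hpos : ∀ ξ ∈ Ioo u v, ∀ j, 0 < a j + ν j * ξ) (K : ℝ) :
    ¬ ∀ ξ ∈ Ioo u v, (logActivityQuotient d₀ ν fun j => a j + ν j * ξ) = K := by
  intro hconst
  set S := ∑ j, ν j
  have hN : ∀ ξ ∈ Ioo u v, 0 < d₀ + ∑ j, (a j + ν j * ξ) := fun ξ hξ =>
    add_pos_of_nonneg_of_pos hd₀ (Finset.sum_pos (fun j _ => hpos ξ hξ j) Finset.univ_nonempty)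
  have hcrit : ∀ ξ ∈ Ioo u v,
      ∑ j, ν j ^ 2 / (a j + ν j * ξ) - (1 + S) * S / (d₀ + ∑ j, (a j + ν j * ξ)) = 0 := by
    intro ξ hξ
    have hK := (hasDerivAt_const ξ K).congr_of_eventuallyEq
      (eventually_of_mem (Ioo_mem_nhds hξ.1 hξ.2) hconst)
    exact (hasDerivAt_logActivityQuotient_affine (fun j => (hpos ξ hξ j).ne')
      (hN ξ hξ).ne').unique hK
  have hmid : (u + v) / 2 ∈ Ioo u v := ⟨by linarith, by linarith⟩
  rcases eq_or_ne S 0 with hS | hS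
  · have hcrit_mid := hcrit _ hmid
    rw [hS, mul_zero, zero_div, sub_zero] at hcrit_mid
    exact (Finset.sum_pos (fun j _ => div_pos (pow_two_pos_of_ne_zero (hν j)) (hpos _ hmid j))
      Finset.univ_nonempty).ne' hcrit_mid
  · have hNaff : ∀ ξ, d₀ + ∑ j, (a j + ν j * ξ) = (d₀ + ∑ j, a j) + S * ξ := fun ξ => by
      rw [Finset.sum_add_distrib, ← Finset.sum_mul]; ring
    -- the index `none` carries the term of the total amount `(d₀ + ∑ a) + S ξ`
    have hslopes := sum_div_eq_zero_of_sum_div_affine_eq_zero (s := Ioo u v)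
      (w := fun k : Option ι => k.elim (-((1 + S) * S)) fun j => ν j ^ 2)
      (b := fun k : Option ι => k.elim S ν) (c := fun k : Option ι => k.elim (d₀ + ∑ j, a j) a)
      (fun k => k.rec hS hν) (Ioo_infinite huv)
      (fun ξ hξ k => k.rec (hNaff ξ ▸ (hN ξ hξ).ne') fun j => (hpos ξ hξ j).ne')
      (fun ξ hξ => by
        simp only [Fintype.sum_option, Option.elim, ← hNaff]
        rw [← hcrit ξ hξ]; ring)
    have hν_sq : ∀ j, ν j ^ 2 / ν j = ν j := fun j => by rw [sq, mul_div_cancel_right₀ _ (hν j)]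
    simp only [Fintype.sum_option, Option.elim, hν_sq, neg_div, mul_div_cancel_right₀ _ hS]
      at hslopes
    linarith
end

theorem dilute_solution_equilibrium_is_dynamic_general
    (c : ℕ) (ν : Fin c → ℝ)
    (hν : ∀ i, ν i ≠ 0)
    (d₀ : ℝ) (hd₀ : 0 < d₀) (n₀ : ℝ → ℝ) (hn₀ : ∀ t, n₀ t = d₀)
    (n n' : Fin c → ℝ → ℝ)
    (hderiv : ∀ i, ∀ t ∈ Set.Icc (0:ℝ) 1, HasDerivAt (n i) (n' i t) t)
    (hpos : ∀ i, ∀ t ∈ Set.Icc (0:ℝ) 1, 0 < n i t)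
    (hlink : ∀ i j, ∀ t ∈ Set.Icc (0:ℝ) 1, ν j * n' i t = ν i * n' j t)
    (Q : ℝ → ℝ)
    (hQ : ∀ t, Q t = (n₀ t / (n₀ t + ∑ j, n j t)) *
      ∏ i, (n i t / (n₀ t + ∑ j, n j t)) ^ (ν i)) :
    (∀ t ∈ Set.Icc (0:ℝ) 1, ∀ s ∈ Set.Icc (0:ℝ) 1, Q t = Q s) ↔
      (∀ i, ∀ t ∈ Set.Icc (0:ℝ) 1, ∀ s ∈ Set.Icc (0:ℝ) 1, n i t = n i s) := by
  refine ⟨fun hQc i => ?_, fun hconst t ht s hs => by simp only [hQ, hn₀, hconst _ t ht s hs]⟩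
  have : Nonempty (Fin c) := ⟨i⟩
  obtain ⟨ξ, hξc, hamount⟩ := exists_extent_of_linkage i (hν i) hderiv hlink
  suffices hξ : ∀ t ∈ Icc (0 : ℝ) 1, ∀ s ∈ Icc (0 : ℝ) 1, ξ t = ξ s by
    intro t ht s hs
    rw [hamount i t ht, hamount i s hs, hξ t ht s hs]
  by_contra! ⟨t, ht, s, hs, hts⟩
  obtain ⟨u, v, huv, hsub⟩ := exists_Ioo_subset_image_of_ne isPreconnected_Icc hξc ht hs hts
  have h0 : (0 : ℝ) ∈ Icc (0 : ℝ) 1 := left_mem_Icc.2 zero_le_one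
  refine logActivityQuotient_affine_not_constOn hd₀.le hν huv (a := fun j => n j 0)
    (fun ζ hζ j => ?_) (Real.log (Q 0)) fun ζ hζ => ?_
  all_goals obtain ⟨τ, hτ, rfl⟩ := hsub hζ
  · exact hamount j τ hτ ▸ hpos j τ hτ
  · rw [← hQc τ hτ 0 h0, hQ, hn₀,
      ← log_activityQuotient hd₀ ν fun j => hamount j τ hτ ▸ hpos j τ hτ]
    simp only [← hamount _ τ hτ]

/-- For a dilute solution with a non-reacting solvent (substance 0, constant
amount `d₀ > 0`), along a feasible chemical path with nonzero stoichiometric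
coefficients `ν₁,…,ν_c` satisfying `1 + ν₁ + ⋯ + ν_c ≠ 0`, the conventional
activity quotient `Q = x₀ · ∏ xᵢ ^ νᵢ` is constant on `[0,1]` if and only if
every solute molar amount `nᵢ` (1 ≤ i ≤ c) is constant on `[0,1]`. -/
theorem dilute_solution_equilibrium_is_dynamic
    (c : ℕ) (hc : 2 ≤ c) (ν : Fin c → ℝ)
    (hν : ∀ i, ν i ≠ 0) (hsum : 1 + ∑ i, ν i ≠ 0)
    (d₀ : ℝ) (hd₀ : 0 < d₀) (n₀ : ℝ → ℝ) (hn₀ : ∀ t, n₀ t = d₀)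
    (n n' : Fin c → ℝ → ℝ)
    (hderiv : ∀ i, ∀ t ∈ Set.Icc (0:ℝ) 1, HasDerivAt (n i) (n' i t) t)
    (hpos : ∀ i, ∀ t ∈ Set.Icc (0:ℝ) 1, 0 < n i t)
    (hlink : ∀ i j, ∀ t ∈ Set.Icc (0:ℝ) 1, ν j * n' i t = ν i * n' j t)
    (Q : ℝ → ℝ)
    (hQ : ∀ t, Q t = (n₀ t / (n₀ t + ∑ j, n j t)) *
      ∏ i, (n i t / (n₀ t + ∑ j, n j t)) ^ (ν i)) :
    (∀ t ∈ Set.Icc (0:ℝ) 1, ∀ s ∈ Set.Icc (0:ℝ) 1, Q t = Q s) ↔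
      (∀ i, ∀ t ∈ Set.Icc (0:ℝ) 1, ∀ s ∈ Set.Icc (0:ℝ) 1, n i t = n i s) :=
  dilute_solution_equilibrium_is_dynamic_general c ν hν d₀ hd₀ n₀ hn₀ n n' hderiv hpos hlink Q hQ
end

section
/- Let c ≥ 2 and let ν₁,…,ν_c be nonzero real numbers such that ν_i > 0 for at least one i and ν_j < 0 for at least one j. Let ε : [0,1] → ℝ be continuous with ε(t) > 0 for all t. Then there exist t₀ ∈ (0,1], real constants d₁,…,d_{c−1}, and continuous functions n₁,…,n_c : [0,t₀] → ℝ such that n_i(t) > 0 for all i and t, n_i(t) = (ν_i/ν_c)·n_c(t) + d_i for all 1 ≤ i ≤ c−1 and all t, and ∏_{i=1}^c (n_i(t)/n(t))^{ν_i} = ε(t) for all t ∈ [0,t₀], where n(t) = n₁(t)+⋯+n_c(t). -/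
/-!
At extent `ξ ∈ (0, 1)` the amounts `nᵢ = νᵢ⁻ + νᵢ ξ` are positive and satisfy the linkage
relations. Mole fractions are scale invariant, so for `ξ = sigmoid u` one may rescale by
`1 + e⁻ᵘ` to the amounts `νᵢ⁺ + νᵢ⁻ e⁻ᵘ`; with `P = ∑ νᵢ⁺`, `N = ∑ νᵢ⁻` and
`C = ∑ νᵢ log |νᵢ|` their activity quotient is `exp (C + F u)`, where
`F u = N log (P eᵘ + N) - P log (P + N e⁻ᵘ)`. Both terms of `F` increase with `u`, the first
tending to `∞` and the second to `-∞` at the two ends, so `F` is an increasing homeomorphism of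
`ℝ` and `u(t) = F⁻¹ (log ε(t) - C)` gives a continuous path with `Q = ε` on all of `[0, 1]`.
-/

open Real Filter Topology

lemma StrictMono.exists_continuous_rightInverse {α β : Type*} [LinearOrder α]
    [TopologicalSpace α] [OrderTopology α] [LinearOrder β] [TopologicalSpace β] [OrderTopology β]
    {f : α → β} (hf : StrictMono f) (hsurj : Function.Surjective f) :
    ∃ g : β → α, Continuous g ∧ ∀ y, f (g y) = y :=
  ⟨(hf.orderIsoOfSurjective f hsurj).symm, OrderIso.continuous _,
    hf.orderIsoOfSurjective_self_symm_apply f hsurj⟩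

noncomputable def activityQuotient {ι : Type*} [Fintype ι] (ν n : ι → ℝ) : ℝ :=
  ∏ i, (n i / ∑ j, n j) ^ ν i

section ActivityQuotient

variable {ι : Type*} [Fintype ι] (ν : ι → ℝ) {n : ι → ℝ}

lemma activityQuotient_smul (n : ι → ℝ) {a : ℝ} (ha : a ≠ 0) :
    activityQuotient ν (a • n) = activityQuotient ν n := by
  simp only [activityQuotient, Pi.smul_apply, smul_eq_mul, ← Finset.mul_sum,
    mul_div_mul_left _ _ ha]

lemma activityQuotient_eq_exp (hn : ∀ i, 0 < n i) :
    activityQuotient ν n = exp (∑ i, ν i * log (n i) - (∑ i, ν i) * log (∑ i, n i)) := by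
  rw [Finset.sum_mul, ← Finset.sum_sub_distrib, exp_sum]
  refine Finset.prod_congr rfl fun i _ => ?_
  have hsum : 0 < ∑ j, n j := Finset.sum_pos (fun j _ => hn j) ⟨i, Finset.mem_univ i⟩
  rw [rpow_def_of_pos (div_pos (hn i) hsum), log_div (hn i).ne' hsum.ne']
  ring_nf

end ActivityQuotient

noncomputable def logQuotientProfile (P N u : ℝ) : ℝ :=
  N * log (P * exp u + N) - P * log (P + N * exp (-u))

section LogQuotientProfile

variable {P N : ℝ}

lemma logQuotientProfile_neg (P N u : ℝ) :
    logQuotientProfile P N (-u) = -logQuotientProfile N P u := by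
  simp only [logQuotientProfile, neg_neg, add_comm N, add_comm P]
  ring

lemma strictMono_logQuotientProfile (hP : 0 < P) (hN : 0 < N) :
    StrictMono (logQuotientProfile P N) := by
  intro u v huv
  have hgrow : log (P * exp u + N) < log (P * exp v + N) :=
    log_lt_log (by positivity) (by gcongr)
  have hdecay : log (P + N * exp (-v)) < log (P + N * exp (-u)) :=
    log_lt_log (by positivity) (by gcongr)
  unfold logQuotientProfile
  nlinarith

lemma continuous_logQuotientProfile (hP : 0 < P) (hN : 0 < N) :
    Continuous (logQuotientProfile P N) := by
  unfold logQuotientProfile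
  fun_prop (disch := intro u; positivity)

lemma tendsto_logQuotientProfile_atTop (hP : 0 < P) (hN : 0 < N) :
    Tendsto (logQuotientProfile P N) atTop atTop := by
  have hgrow : Tendsto (fun u => N * log (P * exp u + N)) atTop atTop :=
    (tendsto_log_atTop.comp (tendsto_atTop_add_const_right _ N
      (tendsto_exp_atTop.const_mul_atTop hP))).const_mul_atTop hN
  have hdecay : Tendsto (fun u => P * log (P + N * exp (-u))) atTop (𝓝 (P * log P)) := by
    have h := ((tendsto_exp_neg_atTop_nhds_zero.const_mul N).const_add P).log
      (by simpa using hP.ne')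
    simpa using h.const_mul P
  exact hgrow.atTop_add hdecay.neg

lemma tendsto_logQuotientProfile_atBot (hP : 0 < P) (hN : 0 < N) :
    Tendsto (logQuotientProfile P N) atBot atBot := by
  have h := tendsto_neg_atTop_atBot.comp
    ((tendsto_logQuotientProfile_atTop hN hP).comp tendsto_neg_atBot_atTop)
  refine h.congr fun u => ?_
  simp [logQuotientProfile_neg]

lemma surjective_logQuotientProfile (hP : 0 < P) (hN : 0 < N) :
    Function.Surjective (logQuotientProfile P N) :=
  (continuous_logQuotientProfile hP hN).surjective (tendsto_logQuotientProfile_atTop hP hN)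
    (tendsto_logQuotientProfile_atBot hP hN)

end LogQuotientProfile

lemma posPart_add_negPart_mul_exp_pos {a : ℝ} (ha : a ≠ 0) (w : ℝ) : 0 < a⁺ + a⁻ * exp w := by
  rcases ha.lt_or_gt with ha | ha
  · rw [posPart_of_nonpos ha.le, negPart_of_nonpos ha.le]; nlinarith [exp_pos w]
  · rw [posPart_of_nonneg ha.le, negPart_of_nonneg ha.le]; linarith

lemma mul_log_posPart_add_negPart_mul_exp {a : ℝ} (ha : a ≠ 0) (u : ℝ) :
    a * log (a⁺ + a⁻ * exp (-u)) = a * log |a| + a⁻ * u := by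
  rcases ha.lt_or_gt with ha | ha
  · rw [posPart_of_nonpos ha.le, negPart_of_nonpos ha.le, abs_of_neg ha, zero_add,
      log_mul (neg_ne_zero.2 ha.ne) (exp_pos _).ne', log_exp]
    ring
  · rw [posPart_of_nonneg ha.le, negPart_of_nonneg ha.le, abs_of_pos ha]
    simp

lemma log_mul_exp_add (P N u : ℝ) (h : 0 < P + N * exp (-u)) :
    log (P * exp u + N) = u + log (P + N * exp (-u)) := by
  have hfactor : P * exp u + N = exp u * (P + N * exp (-u)) := by
    rw [exp_neg]; field_simp
  rw [hfactor, log_mul (exp_pos u).ne' h.ne', log_exp]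

def amountsAtExtent {ι : Type*} (ν : ι → ℝ) (ξ : ℝ) (i : ι) : ℝ :=
  (ν i)⁻ + ν i * ξ

section AmountsAtExtent

variable {ι : Type*} {ν : ι → ℝ}

lemma amountsAtExtent_pos (hν : ∀ i, ν i ≠ 0) {ξ : ℝ} (hξ₀ : 0 < ξ) (hξ₁ : ξ < 1) (i : ι) :
    0 < amountsAtExtent ν ξ i := by
  unfold amountsAtExtent
  rcases (hν i).lt_or_gt with hi | hi
  · rw [negPart_of_nonpos hi.le]; nlinarith
  · rw [negPart_of_nonneg hi.le]; positivity

lemma one_add_exp_neg_smul_amountsAtExtent_sigmoid (ν : ι → ℝ) (u : ℝ) :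
    (1 + exp (-u)) • amountsAtExtent ν (sigmoid u) = fun i => (ν i)⁺ + (ν i)⁻ * exp (-u) := by
  have h : (1 + exp (-u)) * sigmoid u = 1 := by
    rw [sigmoid_def]; exact mul_inv_cancel₀ (by positivity)
  funext i
  simp only [amountsAtExtent, Pi.smul_apply, smul_eq_mul]
  linear_combination ν i * h - posPart_sub_negPart (ν i)

lemma activityQuotient_amountsAtExtent_sigmoid [Fintype ι] [Nonempty ι] (hν : ∀ i, ν i ≠ 0)
    (u : ℝ) :
    activityQuotient ν (amountsAtExtent ν (sigmoid u))
      = exp (∑ i, ν i * log |ν i| + logQuotientProfile (∑ i, (ν i)⁺) (∑ i, (ν i)⁻) u) := by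
  have hm : ∀ i, 0 < (ν i)⁺ + (ν i)⁻ * exp (-u) :=
    fun i => posPart_add_negPart_mul_exp_pos (hν i) _
  have htotal : ∑ i, ((ν i)⁺ + (ν i)⁻ * exp (-u))
      = (∑ i, (ν i)⁺) + (∑ i, (ν i)⁻) * exp (-u) := by
    rw [Finset.sum_add_distrib, Finset.sum_mul]
  have hnet : ∑ i, ν i = ∑ i, (ν i)⁺ - ∑ i, (ν i)⁻ := by
    simp only [← Finset.sum_sub_distrib, posPart_sub_negPart]
  rw [← activityQuotient_smul ν _ (by positivity : 1 + exp (-u) ≠ 0),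
    one_add_exp_neg_smul_amountsAtExtent_sigmoid, activityQuotient_eq_exp ν hm, htotal, hnet,
    Finset.sum_congr rfl fun i _ => mul_log_posPart_add_negPart_mul_exp (hν i) u,
    Finset.sum_add_distrib, ← Finset.sum_mul, logQuotientProfile,
    log_mul_exp_add _ _ u (htotal ▸ Finset.sum_pos (fun i _ => hm i) Finset.univ_nonempty)]
  congr 1
  ring

end AmountsAtExtent

theorem exists_feasible_path_general
    (c : ℕ) (ν : Fin c → ℝ)
    (hν : ∀ i, ν i ≠ 0) (hνpos : ∃ i, 0 < ν i) (hνneg : ∃ j, ν j < 0)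
    (pivot : Fin c)
    (ε : ℝ → ℝ) (hεcont : ContinuousOn ε (Set.Icc 0 1))
    (hεpos : ∀ t ∈ Set.Icc (0:ℝ) 1, 0 < ε t) :
    ∃ t₀ ∈ Set.Ioc (0:ℝ) 1, ∃ d : Fin c → ℝ, ∃ n : Fin c → ℝ → ℝ,
      (∀ i, ContinuousOn (n i) (Set.Icc 0 t₀)) ∧
      (∀ i, ∀ t ∈ Set.Icc (0:ℝ) t₀, 0 < n i t) ∧
      (∀ i, i ≠ pivot → ∀ t ∈ Set.Icc (0:ℝ) t₀,
        n i t = (ν i / ν pivot) * n pivot t + d i) ∧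
      (∀ t ∈ Set.Icc (0:ℝ) t₀,
        ∏ i, (n i t / ∑ j, n j t) ^ (ν i) = ε t) := by
  have : Nonempty (Fin c) := ⟨pivot⟩
  have hP : 0 < ∑ i, (ν i)⁺ := by
    obtain ⟨i, hi⟩ := hνpos
    exact Finset.sum_pos' (fun j _ => posPart_nonneg _) ⟨i, Finset.mem_univ _, posPart_pos hi⟩
  have hN : 0 < ∑ i, (ν i)⁻ := by
    obtain ⟨i, hi⟩ := hνneg
    exact Finset.sum_pos' (fun j _ => negPart_nonneg _) ⟨i, Finset.mem_univ _, negPart_pos hi⟩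
  obtain ⟨g, hg, hprofile_g⟩ :=
    (strictMono_logQuotientProfile hP hN).exists_continuous_rightInverse
      (surjective_logQuotientProfile hP hN)
  set extent : ℝ → ℝ := fun t => sigmoid (g (log (ε t) - ∑ i, ν i * log |ν i|))
  have hextent : ContinuousOn extent (Set.Icc 0 1) :=
    continuous_sigmoid.comp_continuousOn (hg.comp_continuousOn
      ((hεcont.log fun t ht => (hεpos t ht).ne').sub continuousOn_const))
  refine ⟨1, ⟨one_pos, le_rfl⟩, fun i => (ν i)⁻ - ν i / ν pivot * (ν pivot)⁻,
    fun i t => amountsAtExtent ν (extent t) i,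
    fun i => continuousOn_const.add (continuousOn_const.mul hextent),
    fun i t _ => amountsAtExtent_pos hν (sigmoid_pos _) (sigmoid_lt_one _) i,
    fun i _ t _ => by simp only [amountsAtExtent]; field_simp [hν pivot]; ring, fun t ht => ?_⟩
  change activityQuotient ν (amountsAtExtent ν (extent t)) = ε t
  rw [activityQuotient_amountsAtExtent_sigmoid hν, hprofile_g, add_sub_cancel,
    exp_log (hεpos t ht)]

/-- Existence of a locally defined feasible chemical path realizing a prescribed
continuous positive activity quotient `ε(t)`: there exist `t₀ ∈ (0,1]`, linkage
constants `dᵢ`, and continuous positive molar amounts `nᵢ` on `[0,t₀]` with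
`nᵢ = (νᵢ/ν_c)·n_c + dᵢ` for `i ≠ c` and `∏ (nᵢ/n)^{νᵢ} = ε` on `[0,t₀]`. -/
theorem exists_feasible_path
    (c : ℕ) (hc : 2 ≤ c) (ν : Fin c → ℝ)
    (hν : ∀ i, ν i ≠ 0) (hνpos : ∃ i, 0 < ν i) (hνneg : ∃ j, ν j < 0)
    (pivot : Fin c) (hpivot : (pivot : ℕ) = c - 1)
    (ε : ℝ → ℝ) (hεcont : ContinuousOn ε (Set.Icc 0 1))
    (hεpos : ∀ t ∈ Set.Icc (0:ℝ) 1, 0 < ε t) :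
    ∃ t₀ ∈ Set.Ioc (0:ℝ) 1, ∃ d : Fin c → ℝ, ∃ n : Fin c → ℝ → ℝ,
      (∀ i, ContinuousOn (n i) (Set.Icc 0 t₀)) ∧
      (∀ i, ∀ t ∈ Set.Icc (0:ℝ) t₀, 0 < n i t) ∧
      (∀ i, i ≠ pivot → ∀ t ∈ Set.Icc (0:ℝ) t₀,
        n i t = (ν i / ν pivot) * n pivot t + d i) ∧
      (∀ t ∈ Set.Icc (0:ℝ) t₀,
        ∏ i, (n i t / ∑ j, n j t) ^ (ν i) = ε t) :=
  exists_feasible_path_general c ν hν hνpos hνneg pivot ε hεcont hεpos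
end

section
/- Let F : (0,∞) × (0,∞) → ℝ be such that at every point (T,P) both partial derivatives ∂F/∂T and ∂F/∂P exist, the quantity P·(∂F/∂P)(T,P) is independent of P (i.e. there is G : (0,∞) → ℝ with P·(∂F/∂P)(T,P) = G(T) for all T,P > 0), and (∂F/∂T)(T,P) is independent of P. Then G is a constant function, say with value ε, and F(T,P) = F(T,1) + ε·ln P for all T,P > 0. -/
/-- A function with zero derivative at every positive point takes the same
value at any two positive points. -/
lemma zero_deriv_const_pos {f : ℝ → ℝ} (h : ∀ x > (0:ℝ), HasDerivAt f 0 x)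
    {a b : ℝ} (ha : 0 < a) (hb : 0 < b) : f a = f b := by
  have key : ∀ {a b : ℝ}, 0 < a → 0 < b → a < b → f a = f b := by
    intro a b ha hb hab
    have hcont : ContinuousOn f (Set.Icc a b) := fun x hx =>
      ((h x (lt_of_lt_of_le ha hx.1)).continuousAt).continuousWithinAt
    obtain ⟨c, hc, hc'⟩ := exists_hasDerivAt_eq_slope f (fun _ => (0:ℝ)) hab hcont
      (fun x hx => h x (lt_trans ha hx.1))
    have : f b - f a = 0 := by
      have hne : b - a ≠ 0 := sub_ne_zero.mpr hab.ne'
      field_simp at hc'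
      linarith [hc'.symm]
    linarith
  rcases lt_trichotomy a b with hab | hab | hab
  · exact key ha hb hab
  · rw [hab]
  · exact (key hb ha hab).symm

/-- If both partial derivatives of `F(T,P)` exist on `(0,∞)²`, with
`P·(∂F/∂P)(T,P) = G(T)` independent of `P` and `(∂F/∂T)(T,P)` independent of
`P`, then `G` is constant, say `ε`, and `F(T,P) = F(T,1) + ε·ln P`. -/
theorem log_pressure_dependence
    (F FT FP : ℝ → ℝ → ℝ)
    (hFT : ∀ T > (0:ℝ), ∀ P > (0:ℝ), HasDerivAt (fun s => F s P) (FT T P) T)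
    (hFP : ∀ T > (0:ℝ), ∀ P > (0:ℝ), HasDerivAt (fun s => F T s) (FP T P) P)
    (G : ℝ → ℝ)
    (hG : ∀ T > (0:ℝ), ∀ P > (0:ℝ), P * FP T P = G T)
    (hTindep : ∀ T > (0:ℝ), ∀ P₁ > (0:ℝ), ∀ P₂ > (0:ℝ), FT T P₁ = FT T P₂) :
    ∃ ε : ℝ, (∀ T > (0:ℝ), G T = ε) ∧
      (∀ T > (0:ℝ), ∀ P > (0:ℝ), F T P = F T 1 + ε * Real.log P) := by
  -- Step 1: F T P = F T 1 + G T * log P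
  have key : ∀ T > (0:ℝ), ∀ P > (0:ℝ), F T P = F T 1 + G T * Real.log P := by
    intro T hT P hP
    have hderiv : ∀ x > (0:ℝ),
        HasDerivAt (fun s => F T s - G T * Real.log s) 0 x := by
      intro x hx
      have h1 := (hFP T hT x hx).sub
        ((Real.hasDerivAt_log hx.ne').const_mul (G T))
      have : FP T x - G T * x⁻¹ = 0 := by
        have := hG T hT x hx
        field_simp
        linarith
      rwa [this] at h1
    have := zero_deriv_const_pos hderiv hP one_pos
    simp only [Real.log_one, mul_zero, sub_zero] at this
    linarith
  refine ⟨G 1, ?_, ?_⟩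
  · -- Step 2: G is constant
    intro T hT
    have hP : (0:ℝ) < Real.exp 1 := Real.exp_pos 1
    have hderiv : ∀ x > (0:ℝ),
        HasDerivAt (fun s => F s (Real.exp 1) - F s 1) 0 x := by
      intro x hx
      have h1 := (hFT x hx (Real.exp 1) hP).sub (hFT x hx 1 one_pos)
      have : FT x (Real.exp 1) - FT x 1 = 0 := by
        rw [hTindep x hx (Real.exp 1) hP 1 one_pos]; ring
      rwa [this] at h1
    have h2 := zero_deriv_const_pos hderiv hT one_pos
    have e1 := key T hT (Real.exp 1) hP
    have e2 := key 1 one_pos (Real.exp 1) hP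
    rw [Real.log_exp] at e1 e2
    simp only [e1, e2] at h2
    linarith
  · intro T hT P hP
    rw [key T hT P hP]
    have hP1 : (0:ℝ) < Real.exp 1 := Real.exp_pos 1
    have hderiv : ∀ x > (0:ℝ),
        HasDerivAt (fun s => F s (Real.exp 1) - F s 1) 0 x := by
      intro x hx
      have h1 := (hFT x hx (Real.exp 1) hP1).sub (hFT x hx 1 one_pos)
      have : FT x (Real.exp 1) - FT x 1 = 0 := by
        rw [hTindep x hx (Real.exp 1) hP1 1 one_pos]; ring
      rwa [this] at h1
    have h2 := zero_deriv_const_pos hderiv hT one_pos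
    have e1 := key T hT (Real.exp 1) hP1
    have e2 := key 1 one_pos (Real.exp 1) hP1
    rw [Real.log_exp] at e1 e2
    simp only [e1, e2] at h2
    have : G T = G 1 := by linarith
    rw [this]
end

section
/- Let R > 0, P⁰ > 0 and ε ∈ ℝ, and define Q(T,P) = exp(ε·ln(P/P⁰)/(R·T)) for T,P > 0, and H(T,P) = P²·(ln(P/P⁰)/2 − 1/4) + T²/2. Suppose γ(t) = (T(t), P(t)) is a differentiable curve on a real interval with T(t) > 0 and P(t) > 0 which solves the gradient flow of Q, i.e. T′(t) = (∂Q/∂T)(T(t),P(t)) and P′(t) = (∂Q/∂P)(T(t),P(t)) for all t. Then t ↦ H(T(t),P(t)) is constant; that is, the paths of maximal reaction are contained in the level curves P²·(ln P/2 − ln P⁰/2 − 1/4) + T²/2 = c. -/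
/-!
The gradient of `Q = exp (ε log (P/P⁰) / (R T))` is `Q ε / (R T) · (-log (P/P⁰) / T, 1 / P)`,
while that of `H` is `(T, P log (P/P⁰))`. These are orthogonal, so `H` has zero derivative along
every integral curve of `∇Q`, and is therefore constant on the (convex) parameter interval.
-/

open Real

theorem Convex.eq_of_hasDerivWithinAt_zero {E : Type*} [NormedAddCommGroup E] [NormedSpace ℝ E]
    {f : ℝ → E} {s : Set ℝ} (hs : Convex ℝ s) (hf : ∀ x ∈ s, HasDerivWithinAt f 0 s x)
    {x y : ℝ} (hx : x ∈ s) (hy : y ∈ s) : f x = f y := by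
  have h := hs.norm_image_sub_le_of_norm_hasDerivWithin_le hf (C := 0) (by simp) hy hx
  simpa [sub_eq_zero] using h

namespace IdealSolution

noncomputable def activityCoeff (R P0 ε T P : ℝ) : ℝ := exp (ε * log (P / P0) / (R * T))

noncomputable def levelFunction (P0 T P : ℝ) : ℝ :=
  P ^ 2 * (log (P / P0) / 2 - 1 / 4) + T ^ 2 / 2

variable {R P0 ε : ℝ}

theorem hasDerivAt_log_div_const {x : ℝ} (hx : x ≠ 0) (hP0 : P0 ≠ 0) :
    HasDerivAt (fun y => log (y / P0)) x⁻¹ x := by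
  refine (((hasDerivAt_id' x).div_const P0).log (div_ne_zero hx hP0)).congr_deriv ?_
  field_simp

theorem hasDerivAt_activityCoeff_temperature {T : ℝ} (P : ℝ) (hT : T ≠ 0) :
    HasDerivAt (fun T => activityCoeff R P0 ε T P)
      (-(activityCoeff R P0 ε T P * ε * log (P / P0) / (R * T ^ 2))) T := by
  have h := ((hasDerivAt_inv hT).const_mul (ε * log (P / P0) / R)).exp
  convert h using 1
  · funext T; simp only [activityCoeff, mul_inv, div_eq_mul_inv, mul_assoc]
  · unfold activityCoeff; field_simp

theorem hasDerivAt_activityCoeff_pressure (T : ℝ) {P : ℝ} (hP : P ≠ 0) (hP0 : P0 ≠ 0) :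
    HasDerivAt (fun P => activityCoeff R P0 ε T P)
      (activityCoeff R P0 ε T P * ε / (R * T * P)) P := by
  refine (((hasDerivAt_log_div_const hP hP0).const_mul ε).div_const (R * T)).exp.congr_deriv ?_
  unfold activityCoeff
  ring

theorem hasDerivAt_levelFunction_comp {T P : ℝ → ℝ} {T' P' t : ℝ} (hT : HasDerivAt T T' t)
    (hP : HasDerivAt P P' t) (hPt : P t ≠ 0) (hP0 : P0 ≠ 0) :
    HasDerivAt (fun s => levelFunction P0 (T s) (P s))
      (P t * P' * log (P t / P0) + T t * T') t := by
  have hlog : HasDerivAt (fun s => log (P s / P0)) ((P t)⁻¹ * P') t :=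
    (hasDerivAt_log_div_const hPt hP0).comp t hP
  refine (((hP.fun_pow 2).fun_mul ((hlog.div_const 2).sub_const (1 / 4))).fun_add
    ((hT.fun_pow 2).div_const 2)).congr_deriv ?_
  field_simp
  ring

theorem hasDerivAt_levelFunction_of_gradient_flow {T P : ℝ → ℝ} {t : ℝ}
    (hT : HasDerivAt T (deriv (fun s => activityCoeff R P0 ε s (P t)) (T t)) t)
    (hP : HasDerivAt P (deriv (fun s => activityCoeff R P0 ε (T t) s) (P t)) t)
    (hTt : T t ≠ 0) (hPt : P t ≠ 0) (hP0 : P0 ≠ 0) :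
    HasDerivAt (fun s => levelFunction P0 (T s) (P s)) 0 t := by
  rw [(hasDerivAt_activityCoeff_temperature _ hTt).deriv] at hT
  rw [(hasDerivAt_activityCoeff_pressure _ hPt hP0).deriv] at hP
  refine (hasDerivAt_levelFunction_comp hT hP hPt hP0).congr_deriv ?_
  field_simp
  ring

end IdealSolution

theorem maximal_reaction_paths_ideal_general
    (R P0 : ℝ) (hP0 : 0 < P0) (ε : ℝ)
    (Q Hf : ℝ → ℝ → ℝ)
    (hQ : ∀ T P, Q T P = Real.exp (ε * Real.log (P / P0) / (R * T)))
    (hHf : ∀ T P, Hf T P = P ^ 2 * (Real.log (P / P0) / 2 - 1 / 4) + T ^ 2 / 2)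
    (I : Set ℝ) (hI : I.OrdConnected)
    (T P : ℝ → ℝ)
    (hpos : ∀ t ∈ I, 0 < T t ∧ 0 < P t)
    (hT : ∀ t ∈ I, HasDerivAt T (deriv (fun s => Q s (P t)) (T t)) t)
    (hP : ∀ t ∈ I, HasDerivAt P (deriv (fun s => Q (T t) s) (P t)) t) :
    ∀ t ∈ I, ∀ s ∈ I, Hf (T t) (P t) = Hf (T s) (P s) := by
  obtain rfl : Q = IdealSolution.activityCoeff R P0 ε := funext₂ hQ
  obtain rfl : Hf = IdealSolution.levelFunction P0 := funext₂ hHf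
  intro t ht s hs
  refine hI.convex.eq_of_hasDerivWithinAt_zero
    (f := fun u => IdealSolution.levelFunction P0 (T u) (P u)) (fun u hu => ?_) ht hs
  obtain ⟨hTu, hPu⟩ := hpos u hu
  exact (IdealSolution.hasDerivAt_levelFunction_of_gradient_flow (hT u hu) (hP u hu) hTu.ne' hPu.ne'
    hP0.ne').hasDerivWithinAt

/-- Paths of maximal reaction for an ideal solution: along any gradient-flow
curve of `Q(T,P) = exp(ε·ln(P/P⁰)/(R·T))` in the (T,P)-plane, the quantity
`H(T,P) = P²·(ln(P/P⁰)/2 − 1/4) + T²/2` is constant; i.e. the paths of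
maximal reaction lie in the level curves of `H`. -/
theorem maximal_reaction_paths_ideal
    (R P0 : ℝ) (hR : 0 < R) (hP0 : 0 < P0) (ε : ℝ)
    (Q Hf : ℝ → ℝ → ℝ)
    (hQ : ∀ T P, Q T P = Real.exp (ε * Real.log (P / P0) / (R * T)))
    (hHf : ∀ T P, Hf T P = P ^ 2 * (Real.log (P / P0) / 2 - 1 / 4) + T ^ 2 / 2)
    (I : Set ℝ) (hI : I.OrdConnected)
    (T P : ℝ → ℝ)
    (hpos : ∀ t ∈ I, 0 < T t ∧ 0 < P t)
    (hT : ∀ t ∈ I, HasDerivAt T (deriv (fun s => Q s (P t)) (T t)) t)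
    (hP : ∀ t ∈ I, HasDerivAt P (deriv (fun s => Q (T t) s) (P t)) t) :
    ∀ t ∈ I, ∀ s ∈ I, Hf (T t) (P t) = Hf (T s) (P s) :=
  maximal_reaction_paths_ideal_general R P0 hP0 ε Q Hf hQ hHf I hI T P hpos hT hP
end

section
/- Let R > 0, P⁰ > 0, ε ∈ ℝ, and let e : (0,∞) → ℝ be differentiable with P·e′(P) ≠ ε for all P > 0. Define Q(T,P) = exp((ε·ln(P/P⁰) − e(P))/(R·T)) for T,P > 0, and let F : (0,∞) → ℝ be differentiable with F′(P) = (ε·P·ln(P/P⁰) − P·e(P))/(P·e′(P) − ε) for all P > 0. If γ(t) = (T(t),P(t)) is a differentiable curve with T(t) > 0, P(t) > 0 solving the gradient flow T′(t) = (∂Q/∂T)(γ(t)), P′(t) = (∂Q/∂P)(γ(t)), then t ↦ F(P(t)) − T(t)²/2 is constant. -/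
/-!
Write `A(P) = ε·ln(P/P⁰) − e(P)` and `q = Q(T,P)`. The gradient flow reads
`T′ = −q·A/(R·T²)` and `P′ = q·(ε/P − e′(P))/(R·T)`, so by the choice of `F`
both `(F ∘ P)′ = F′(P)·P′` and `(T²/2)′ = T·T′` equal `−q·A/(R·T)`. Hence
`F(P) − T²/2` has zero derivative along the curve and is constant on the
(order-connected) time interval.
-/

open Real

theorem Set.OrdConnected.eq_of_forall_hasDerivAt_zero {E : Type*} [NormedAddCommGroup E]
    [NormedSpace ℝ E] {s : Set ℝ} {f : ℝ → E} (hs : s.OrdConnected)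
    (hf : ∀ x ∈ s, HasDerivAt f 0 x) {x y : ℝ} (hx : x ∈ s) (hy : y ∈ s) : f x = f y := by
  have h := hs.convex.norm_image_sub_le_of_norm_hasDerivWithin_le
    (fun z hz => (hf z hz).hasDerivWithinAt) (fun _ _ => norm_zero.le) hx hy
  rw [zero_mul, norm_le_zero_iff, sub_eq_zero] at h
  exact h.symm

theorem hasDerivAt_exp_div_mul {a R T : ℝ} (hRT : R * T ≠ 0) :
    HasDerivAt (fun s => exp (a / (R * s))) (-(exp (a / (R * T)) * a / (R * T ^ 2))) T := by
  refine ((hasDerivAt_const T a).div ((hasDerivAt_id T).const_mul R) hRT).exp.congr_deriv ?_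
  simp only [id, Pi.div_apply]
  field_simp
  ring

theorem hasDerivAt_exp_mul_log_div_sub_div {ε P0 c P e' : ℝ} {e : ℝ → ℝ} (hP : P ≠ 0)
    (hP0 : P0 ≠ 0) (he : HasDerivAt e e' P) :
    HasDerivAt (fun s => exp ((ε * log (s / P0) - e s) / c))
      (exp ((ε * log (P / P0) - e P) / c) * ((ε / P - e') / c)) P := by
  have hlog : HasDerivAt (fun s => log (s / P0)) (1 / P) P := by
    refine (((hasDerivAt_id P).div_const P0).log (div_ne_zero hP hP0)).congr_deriv ?_
    simp only [id]
    field_simp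
  refine (((hlog.const_mul ε).sub he).div_const c).exp.congr_deriv ?_
  simp only [Pi.sub_apply]
  ring

/-- Paths of maximal reaction with error term, case `ε ≠ 0` allowed: for
`Q(T,P) = exp((ε·ln(P/P⁰) − e(P))/(R·T))` with `P·e′(P) ≠ ε`, and `F` an
antiderivative of `(ε·P·ln(P/P⁰) − P·e(P))/(P·e′(P) − ε)`, along any
gradient-flow curve of `Q` the quantity `F(P) − T²/2` is constant. -/
theorem maximal_reaction_paths_with_error
    (R P0 : ℝ) (hR : 0 < R) (hP0 : 0 < P0) (ε : ℝ)
    (e e' : ℝ → ℝ) (he : ∀ P > (0:ℝ), HasDerivAt e (e' P) P)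
    (hne : ∀ P > (0:ℝ), P * e' P ≠ ε)
    (Q : ℝ → ℝ → ℝ)
    (hQ : ∀ T P, Q T P = Real.exp ((ε * Real.log (P / P0) - e P) / (R * T)))
    (F : ℝ → ℝ)
    (hF : ∀ P > (0:ℝ), HasDerivAt F
      ((ε * P * Real.log (P / P0) - P * e P) / (P * e' P - ε)) P)
    (I : Set ℝ) (hI : I.OrdConnected)
    (T P : ℝ → ℝ)
    (hpos : ∀ t ∈ I, 0 < T t ∧ 0 < P t)
    (hT : ∀ t ∈ I, HasDerivAt T (deriv (fun s => Q s (P t)) (T t)) t)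
    (hP : ∀ t ∈ I, HasDerivAt P (deriv (fun s => Q (T t) s) (P t)) t) :
    ∀ t ∈ I, ∀ s ∈ I,
      F (P t) - T t ^ 2 / 2 = F (P s) - T s ^ 2 / 2 := by
  have hconserved : ∀ u ∈ I, HasDerivAt (fun v => F (P v) - T v ^ 2 / 2) 0 u := by
    intro u hu
    obtain ⟨hTu, hPu⟩ := hpos u hu
    have hT' := hT u hu
    have hP' := hP u hu
    simp only [hQ] at hT' hP'
    rw [(hasDerivAt_exp_div_mul (mul_pos hR hTu).ne').deriv] at hT'
    rw [(hasDerivAt_exp_mul_log_div_sub_div hPu.ne' hP0.ne' (he _ hPu)).deriv] at hP'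
    refine (((hF _ hPu).comp u hP').sub ((hT'.pow 2).div_const 2)).congr_deriv ?_
    have hden : P u * e' (P u) - ε ≠ 0 := sub_ne_zero.2 (hne _ hPu)
    field_simp [hR.ne', hTu.ne', hPu.ne']
    ring
  exact fun t ht s hs => hI.eq_of_forall_hasDerivAt_zero hconserved ht hs
end

section
/- Let R > 0 and let e : (0,∞) → ℝ be differentiable with e′(P) ≠ 0 for all P > 0. Define Q(T,P) = exp(−e(P)/(R·T)) for T,P > 0. Then the partial derivative of Q with respect to T equals (e(P)/(R·T²))·Q(T,P) and the partial derivative with respect to P equals −(e′(P)/(R·T))·Q(T,P). Moreover, if F : (0,∞) → ℝ is differentiable with F′(P) = e(P)/e′(P) for all P > 0, then along any differentiable curve (T(t),P(t)) with T(t),P(t) > 0 solving the gradient flow T′ = ∂Q/∂T, P′ = ∂Q/∂P, the quantity F(P(t)) + T(t)²/2 is constant. -/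
/-! Both partial derivatives follow from the chain rule for `exp`. Along the gradient flow,
`d/dt F(P) = (e/e′)·(−e′/(RT))·Q = −e Q/(RT)` while `d/dt (T²/2) = T·e Q/(RT²) = e Q/(RT)`,
so `F(P) + T²/2` has zero derivative, and the mean value theorem on the interval `I` makes it
constant. -/

open Real

theorem Set.OrdConnected.eq_of_hasDerivAt_eq_zero {I : Set ℝ} (hI : I.OrdConnected) {g : ℝ → ℝ}
    (hg : ∀ t ∈ I, HasDerivAt g 0 t) {t s : ℝ} (ht : t ∈ I) (hs : s ∈ I) : g t = g s := by
  have h := hI.convex.norm_image_sub_le_of_norm_hasDerivWithin_le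
    (fun x hx => (hg x hx).hasDerivWithinAt) (fun _ _ => norm_zero.le) hs ht
  rwa [zero_mul, norm_le_zero_iff, sub_eq_zero] at h

theorem hasDerivAt_exp_neg_div_mul (E : ℝ) {R T : ℝ} (hRT : R * T ≠ 0) :
    HasDerivAt (fun s => exp (-E / (R * s))) (E / (R * T ^ 2) * exp (-E / (R * T))) T := by
  have hden : HasDerivAt (fun s => R * s) R T := by
    simpa using (hasDerivAt_id T).const_mul R
  have hquot : HasDerivAt (fun s => -E / (R * s)) ((0 * (R * T) - -E * R) / (R * T) ^ 2) T :=
    (hasDerivAt_const T (-E)).div hden hRT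
  convert hquot.exp using 1
  field_simp
  ring

theorem hasDerivAt_exp_neg_div {e : ℝ → ℝ} {e' P : ℝ} (he : HasDerivAt e e' P) (c : ℝ) :
    HasDerivAt (fun s => exp (-e s / c)) (-(e' / c) * exp (-e P / c)) P := by
  have hquot : HasDerivAt (fun s => -e s / c) (-e' / c) P := he.neg.div_const c
  convert hquot.exp using 1
  ring

theorem hasDerivAt_add_sq_half_eq_zero {F T P : ℝ → ℝ} {t R E E' q : ℝ}
    (hF : HasDerivAt F (E / E') (P t)) (hE' : E' ≠ 0) (hT0 : T t ≠ 0)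
    (hT : HasDerivAt T (E / (R * T t ^ 2) * q) t)
    (hP : HasDerivAt P (-(E' / (R * T t)) * q) t) :
    HasDerivAt (fun u => F (P u) + T u ^ 2 / 2) 0 t := by
  have hsum : HasDerivAt (fun u => F (P u) + T u ^ 2 / 2)
      (E / E' * (-(E' / (R * T t)) * q) + 2 * T t ^ 1 * (E / (R * T t ^ 2) * q) / 2) t :=
    (hF.comp t hP).add ((hT.pow 2).div_const 2)
  convert hsum using 1
  field_simp
  ring

/-- Case `ε = 0` with error term: for `Q(T,P) = exp(−e(P)/(R·T))` with
`e′(P) ≠ 0`, the partial derivatives are `∂Q/∂T = (e(P)/(R·T²))·Q` and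
`∂Q/∂P = −(e′(P)/(R·T))·Q`; moreover if `F′ = e/e′`, then along any
gradient-flow curve of `Q` the quantity `F(P) + T²/2` is constant. -/
theorem maximal_reaction_paths_eps_zero
    (R : ℝ) (hR : 0 < R)
    (e e' : ℝ → ℝ) (he : ∀ P > (0:ℝ), HasDerivAt e (e' P) P)
    (hne : ∀ P > (0:ℝ), e' P ≠ 0)
    (Q : ℝ → ℝ → ℝ)
    (hQ : ∀ T P, Q T P = Real.exp (-e P / (R * T)))
    (F : ℝ → ℝ)
    (hF : ∀ P > (0:ℝ), HasDerivAt F (e P / e' P) P)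
    (I : Set ℝ) (hI : I.OrdConnected)
    (T P : ℝ → ℝ)
    (hpos : ∀ t ∈ I, 0 < T t ∧ 0 < P t)
    (hT : ∀ t ∈ I, HasDerivAt T (deriv (fun s => Q s (P t)) (T t)) t)
    (hP : ∀ t ∈ I, HasDerivAt P (deriv (fun s => Q (T t) s) (P t)) t) :
    (∀ T > (0:ℝ), ∀ P > (0:ℝ),
      HasDerivAt (fun s => Q s P) ((e P / (R * T ^ 2)) * Q T P) T ∧
      HasDerivAt (fun s => Q T s) (-(e' P / (R * T)) * Q T P) P) ∧
    (∀ t ∈ I, ∀ s ∈ I,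
      F (P t) + T t ^ 2 / 2 = F (P s) + T s ^ 2 / 2) := by
  have hQfun : Q = fun T P => exp (-e P / (R * T)) := funext₂ hQ
  have partials : ∀ T > (0:ℝ), ∀ P > (0:ℝ),
      HasDerivAt (fun s => Q s P) ((e P / (R * T ^ 2)) * Q T P) T ∧
      HasDerivAt (fun s => Q T s) (-(e' P / (R * T)) * Q T P) P := by
    intro T hT0 P hP0
    subst hQfun
    exact ⟨hasDerivAt_exp_neg_div_mul (e P) (by positivity), hasDerivAt_exp_neg_div (he P hP0) (R * T)⟩
  refine ⟨partials, fun t ht s hs => hI.eq_of_hasDerivAt_eq_zero (g := fun u => F (P u) + T u ^ 2 / 2) (fun u hu => ?_) ht hs⟩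
  obtain ⟨hTu, hPu⟩ := hpos u hu
  obtain ⟨hQT, hQP⟩ := partials (T u) hTu (P u) hPu
  exact hasDerivAt_add_sq_half_eq_zero (hF (P u) hPu) (hne (P u) hPu) hTu.ne'
    (hQT.deriv ▸ hT u hu) (hQP.deriv ▸ hP u hu)
end

section
/- Let g : (0,∞) → ℝ be differentiable, v : (0,∞) → ℝ continuous, and H ∈ ℝ, such that for all T > 0 the derivative of T ↦ g(T)/T at T equals −(H + v(T))/T². Then for all 0 < T₁ ≤ T₂: g(T₁) = (T₁/T₂)·g(T₂) − H·(T₁/T₂ − 1) + w(T₁,T₂), where w(T₁,T₂) = T₁·∫_{T₁}^{T₂} v(S)/S² dS. Moreover, if |v(S)| ≤ M for all S ∈ [T₁,T₂], then |w(T₁,T₂)| ≤ M·(1 − T₁/T₂). -/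
/-! Since `(g T - H) / T` has derivative `-v T / T ^ 2`, the fundamental theorem of calculus on
`[T₁, T₂]` gives the identity after multiplying by `T₁`; the bound follows by comparing
`v S / S ^ 2` with `M / S ^ 2`, whose integral is `M / T₁ - M / T₂`. -/

open Set intervalIntegral

lemma integral_const_div_sq {a b : ℝ} (c : ℝ) (ha : 0 < a) (hb : 0 < b) :
    ∫ S in a..b, c / S ^ 2 = c / a - c / b := by
  have hpos : uIcc a b ⊆ Ioi 0 := ordConnected_Ioi.uIcc_subset ha hb
  have hcont : ContinuousOn (fun S : ℝ => c / S ^ 2) (uIcc a b) :=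
    continuousOn_const.div (continuousOn_pow 2) fun S hS => pow_ne_zero 2 (hpos hS).ne'
  have hderiv : ∀ S ∈ uIcc a b, HasDerivAt (fun S : ℝ => -(c * S⁻¹)) (c / S ^ 2) S :=
    fun S hS => ((hasDerivAt_inv (hpos hS).ne').const_mul c).neg.congr_deriv (by ring)
  rw [integral_eq_sub_of_hasDerivAt hderiv hcont.intervalIntegrable]
  ring

lemma integral_div_sq_eq_of_hasDerivAt_div {g v : ℝ → ℝ} {H a b : ℝ}
    (hv : ContinuousOn v (uIcc a b))
    (hGH : ∀ T ∈ uIcc a b, HasDerivAt (fun T => g T / T) (-(H + v T) / T ^ 2) T)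
    (ha : 0 < a) (hb : 0 < b) :
    ∫ S in a..b, v S / S ^ 2 = (g a - H) / a - (g b - H) / b := by
  have hpos : uIcc a b ⊆ Ioi 0 := ordConnected_Ioi.uIcc_subset ha hb
  have hcont : ContinuousOn (fun S => -(v S / S ^ 2)) (uIcc a b) :=
    (hv.div (continuousOn_pow 2) fun S hS => pow_ne_zero 2 (hpos hS).ne').neg
  have hderiv : ∀ S ∈ uIcc a b,
      HasDerivAt (fun S => g S / S - H * S⁻¹) (-(v S / S ^ 2)) S := fun S hS =>
    ((hGH S hS).sub ((hasDerivAt_inv (hpos hS).ne').const_mul H)).congr_deriv (by ring)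
  have hFTC := integral_eq_sub_of_hasDerivAt hderiv hcont.intervalIntegrable
  rw [intervalIntegral.integral_neg] at hFTC
  rw [sub_div, sub_div, div_eq_mul_inv H a, div_eq_mul_inv H b]
  linarith

lemma abs_integral_div_sq_le {v : ℝ → ℝ} {a b M : ℝ} (ha : 0 < a) (hab : a ≤ b)
    (hM : ∀ S ∈ Icc a b, |v S| ≤ M) :
    |∫ S in a..b, v S / S ^ 2| ≤ M / a - M / b := by
  have hb := ha.trans_le hab
  have hcont : ContinuousOn (fun S : ℝ => M / S ^ 2) (uIcc a b) :=
    continuousOn_const.div (continuousOn_pow 2) fun S hS =>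
      pow_ne_zero 2 (ordConnected_Ioi.uIcc_subset ha hb hS).ne'
  rw [← integral_const_div_sq M ha hb, ← Real.norm_eq_abs]
  refine norm_integral_le_of_norm_le hab (Filter.Eventually.of_forall fun S hS => ?_)
    hcont.intervalIntegrable
  have hS2 : 0 < S ^ 2 := pow_pos (ha.trans hS.1) 2
  rw [Real.norm_eq_abs, abs_div, abs_of_pos hS2]
  exact div_le_div_of_nonneg_right (hM S (Ioc_subset_Icc_self hS)) hS2.le

theorem gibbs_energy_linear_with_error_general
    (g v : ℝ → ℝ) (H : ℝ)
    (hv : ContinuousOn v (Set.Ioi 0))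
    (hGH : ∀ T > (0:ℝ), HasDerivAt (fun T => g T / T) (-(H + v T) / T ^ 2) T) :
    ∀ T₁ T₂ : ℝ, 0 < T₁ → T₁ ≤ T₂ →
      (g T₁ = (T₁ / T₂) * g T₂ - H * (T₁ / T₂ - 1)
        + T₁ * ∫ S in T₁..T₂, v S / S ^ 2) ∧
      (∀ M : ℝ, (∀ S ∈ Set.Icc T₁ T₂, |v S| ≤ M) →
        |T₁ * ∫ S in T₁..T₂, v S / S ^ 2| ≤ M * (1 - T₁ / T₂)) := by
  intro T₁ T₂ h₁ h₁₂
  have h₂ : 0 < T₂ := h₁.trans_le h₁₂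
  have hpos : uIcc T₁ T₂ ⊆ Ioi 0 := ordConnected_Ioi.uIcc_subset h₁ h₂
  have hw := integral_div_sq_eq_of_hasDerivAt_div (hv.mono hpos) (fun T hT => hGH T (hpos hT))
    h₁ h₂
  refine ⟨?_, fun M hM => ?_⟩
  · rw [hw]
    field_simp
    ring
  · calc |T₁ * ∫ S in T₁..T₂, v S / S ^ 2| = T₁ * |∫ S in T₁..T₂, v S / S ^ 2| := by
          rw [abs_mul, abs_of_pos h₁]
      _ ≤ T₁ * (M / T₁ - M / T₂) :=
          mul_le_mul_of_nonneg_left (abs_integral_div_sq_le h₁ h₁₂ hM) h₁.le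
      _ = M * (1 - T₁ / T₂) := by field_simp

/-- Gibbs–Helmholtz with a non-constant enthalpy: if
`(d/dT)(g(T)/T) = −(H + v(T))/T²` on `(0,∞)` with `v` continuous, then for
`0 < T₁ ≤ T₂`, `g(T₁) = (T₁/T₂)·g(T₂) − H·(T₁/T₂ − 1) + w(T₁,T₂)` with
`w(T₁,T₂) = T₁·∫_{T₁}^{T₂} v(S)/S² dS`, and if `|v| ≤ M` on `[T₁,T₂]` then
`|w(T₁,T₂)| ≤ M·(1 − T₁/T₂)`. -/
theorem gibbs_energy_linear_with_error
    (g v : ℝ → ℝ) (H : ℝ)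
    (hg : ∀ T > (0:ℝ), DifferentiableAt ℝ g T)
    (hv : ContinuousOn v (Set.Ioi 0))
    (hGH : ∀ T > (0:ℝ), HasDerivAt (fun T => g T / T) (-(H + v T) / T ^ 2) T) :
    ∀ T₁ T₂ : ℝ, 0 < T₁ → T₁ ≤ T₂ →
      (g T₁ = (T₁ / T₂) * g T₂ - H * (T₁ / T₂ - 1)
        + T₁ * ∫ S in T₁..T₂, v S / S ^ 2) ∧
      (∀ M : ℝ, (∀ S ∈ Set.Icc T₁ T₂, |v S| ≤ M) →
        |T₁ * ∫ S in T₁..T₂, v S / S ^ 2| ≤ M * (1 - T₁ / T₂)) :=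
  gibbs_energy_linear_with_error_general g v H hv hGH
end
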